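/- arXiv:1703.10973 — 2 statements merged into one kernel-verified Lean document; each statement's English description precedes it below -/
import Mathlib

section
/- Let W_0 be an n×n symmetric positive definite matrix, U an n×k real matrix, and set W = W_0 + U U^T. Choose τ with λ_min(W_0) ≤ τ ≤ λ_max(W_0) and set W̃ = τ I + U U^T. Then the relative condition number κ(W̃^{-1/2} W W̃^{-1/2}) is at most κ(W_0) = λ_max(W_0)/λ_min(W_0). -/
/-!
Write `W = W₀ + P` and `W̃ = τ I + P` with `P = U Uᵀ ⪰ 0`. If `μ < λ_min(W₀)/τ`, then `μ < 1`
and `W - μ W̃ = (W₀ - μτ I) + (1 - μ) P` is positive definite, hence invertible, so `μ` is not in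
the spectrum of `W̃⁻¹ W`; dually, if `μ > λ_max(W₀)/τ` then `μ W̃ - W` is positive definite.
So the spectrum lies in `[λ_min(W₀)/τ, λ_max(W₀)/τ]`, an interval whose endpoints have ratio
`κ(W₀)`.
-/

open Matrix

namespace Matrix

variable {ι : Type*} [Fintype ι] [DecidableEq ι]

theorem IsHermitian.posDef_sub_algebraMap {A : Matrix ι ι ℝ} (hA : A.IsHermitian) {c : ℝ}
    (hc : ∀ x ∈ spectrum ℝ A, c < x) : (A - algebraMap ℝ _ c).PosDef := by
  have hspec : ∀ x ∈ spectrum ℝ (A - algebraMap ℝ _ c), 0 < x := by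
    rw [← spectrum.sub_singleton_eq]
    rintro _ ⟨x, hx, _, rfl, rfl⟩
    exact sub_pos.mpr (hc x hx)
  have hpsd : (A - algebraMap ℝ _ c).PosSemidef :=
    posSemidef_iff_isHermitian_and_spectrum_nonneg.mpr
      ⟨hA.sub (IsSelfAdjoint.algebraMap _ (.all c)), fun x hx => (hspec x hx).le⟩
  exact hpsd.posDef_iff_isUnit.mpr <| spectrum.zero_notMem_iff ℝ |>.mp fun h => (hspec 0 h).false

theorem IsHermitian.posDef_algebraMap_sub {A : Matrix ι ι ℝ} (hA : A.IsHermitian) {c : ℝ}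
    (hc : ∀ x ∈ spectrum ℝ A, x < c) : (algebraMap ℝ _ c - A).PosDef := by
  have hneg : ∀ x ∈ spectrum ℝ (-A), -c < x := by
    rw [← spectrum.neg_eq]
    intro x hx
    simpa using neg_lt_neg (hc (-x) hx)
  simpa [sub_eq_add_neg, add_comm] using hA.neg.posDef_sub_algebraMap hneg

theorem notMem_spectrum_inv_mul {A B : Matrix ι ι ℝ} {μ : ℝ} (hB : IsUnit B)
    (h : IsUnit (A - μ • B)) : μ ∉ spectrum ℝ (B⁻¹ * A) := by
  rw [spectrum.notMem_iff]
  have : algebraMap ℝ _ μ - B⁻¹ * A = -(B⁻¹ * (A - μ • B)) := by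
    rw [Algebra.algebraMap_eq_smul_one, Matrix.mul_sub, Matrix.mul_smul,
      nonsing_inv_mul B ((isUnit_iff_isUnit_det B).mp hB)]
    abel
  rw [this]
  exact ((isUnit_nonsing_inv_iff.mpr hB).mul h).neg

section GeneralizedEigenvalues

variable {W₀ P : Matrix ι ι ℝ} {τ : ℝ}

theorem div_le_of_mem_spectrum_inv_mul (hW₀ : W₀.IsHermitian) (hP : P.PosSemidef) (hτ : 0 < τ)
    {a : ℝ} (ha : ∀ x ∈ spectrum ℝ W₀, a ≤ x) (haτ : a ≤ τ) {μ : ℝ}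
    (hμ : μ ∈ spectrum ℝ ((τ • 1 + P)⁻¹ * (W₀ + P))) : a / τ ≤ μ := by
  by_contra! hlt
  have hμτ : μ * τ < a := (lt_div_iff₀ hτ).mp hlt
  have hμ1 : μ ≤ 1 := hlt.le.trans ((div_le_one hτ).mpr haτ)
  have hsplit : W₀ + P - μ • (τ • 1 + P) = (W₀ - algebraMap ℝ _ (μ * τ)) + (1 - μ) • P := by
    rw [Algebra.algebraMap_eq_smul_one]
    module
  refine notMem_spectrum_inv_mul ((PosDef.one.smul hτ).add_posSemidef hP).isUnit ?_ hμ
  rw [hsplit]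
  exact ((hW₀.posDef_sub_algebraMap fun x hx => hμτ.trans_le (ha x hx)).add_posSemidef
    (hP.smul (sub_nonneg.mpr hμ1))).isUnit

theorem le_div_of_mem_spectrum_inv_mul (hW₀ : W₀.IsHermitian) (hP : P.PosSemidef) (hτ : 0 < τ)
    {b : ℝ} (hb : ∀ x ∈ spectrum ℝ W₀, x ≤ b) (hτb : τ ≤ b) {μ : ℝ}
    (hμ : μ ∈ spectrum ℝ ((τ • 1 + P)⁻¹ * (W₀ + P))) : μ ≤ b / τ := by
  by_contra! hlt
  have hμτ : b < μ * τ := (div_lt_iff₀ hτ).mp hlt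
  have hμ1 : 1 ≤ μ := ((one_le_div hτ).mpr hτb).trans hlt.le
  have hsplit : W₀ + P - μ • (τ • 1 + P) = -((algebraMap ℝ _ (μ * τ) - W₀) + (μ - 1) • P) := by
    rw [Algebra.algebraMap_eq_smul_one]
    module
  refine notMem_spectrum_inv_mul ((PosDef.one.smul hτ).add_posSemidef hP).isUnit ?_ hμ
  rw [hsplit]
  exact ((hW₀.posDef_algebraMap_sub fun x hx => (hb x hx).trans_lt hμτ).add_posSemidef
    (hP.smul (sub_nonneg.mpr hμ1))).isUnit.neg

end GeneralizedEigenvalues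

end Matrix

theorem stmt_1_general {n k : ℕ} {W0 : Matrix (Fin n) (Fin n) ℝ}
    (hW0 : W0.PosDef) (U : Matrix (Fin n) (Fin k) ℝ) (τ : ℝ)
    (hτ1 : (⨅ i, hW0.1.eigenvalues i) ≤ τ)
    (hτ2 : τ ≤ ⨆ i, hW0.1.eigenvalues i) :
    ∀ μ ∈ spectrum ℝ
        ((τ • (1 : Matrix (Fin n) (Fin n) ℝ) + U * Uᵀ)⁻¹ * (W0 + U * Uᵀ)),
    ∀ ν ∈ spectrum ℝ
        ((τ • (1 : Matrix (Fin n) (Fin n) ℝ) + U * Uᵀ)⁻¹ * (W0 + U * Uᵀ)),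
      μ ≤ ((⨆ i, hW0.1.eigenvalues i) / (⨅ i, hW0.1.eigenvalues i)) * ν := by
  intro μ hμ ν hν
  rcases isEmpty_or_nonempty (Fin n) with _ | _
  · simp [spectrum.of_subsingleton] at hμ
  set a := ⨅ i, hW0.1.eigenvalues i
  set b := ⨆ i, hW0.1.eigenvalues i
  have hbounds : ∀ x ∈ spectrum ℝ W0, a ≤ x ∧ x ≤ b := by
    rw [hW0.1.spectrum_real_eq_range_eigenvalues]
    rintro _ ⟨i, rfl⟩
    exact ⟨ciInf_le (Set.finite_range _).bddBelow i, le_ciSup (Set.finite_range _).bddAbove i⟩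
  have ha : 0 < a := by
    obtain ⟨i, hi⟩ := exists_eq_ciInf_of_finite (f := hW0.1.eigenvalues)
    exact (hW0.eigenvalues_pos i).trans_eq hi
  have hτ : 0 < τ := ha.trans_le hτ1
  have hUU : (U * Uᵀ).PosSemidef := by simpa using posSemidef_self_mul_conjTranspose U
  calc μ ≤ b / τ :=
        le_div_of_mem_spectrum_inv_mul hW0.1 hUU hτ (fun x hx => (hbounds x hx).2) hτ2 hμ
    _ = b / a * (a / τ) := by field_simp
    _ ≤ b / a * ν := mul_le_mul_of_nonneg_left
        (div_le_of_mem_spectrum_inv_mul hW0.1 hUU hτ (fun x hx => (hbounds x hx).1) hτ1 hν)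
        (div_nonneg (ha.le.trans (hτ1.trans hτ2)) ha.le)

/-- Let `W₀` be symmetric positive definite, `W = W₀ + U Uᵀ`,
`W̃ = τ I + U Uᵀ` with `λ_min(W₀) ≤ τ ≤ λ_max(W₀)`.  Then the relative condition
number of the pencil `(W, W̃)` — i.e. the ratio of any two eigenvalues of
`W̃⁻¹ W` (which is similar to `W̃^{-1/2} W W̃^{-1/2}`) — is at most
`κ(W₀) = λ_max(W₀)/λ_min(W₀)`. -/
theorem stmt_1 {n k : ℕ} (hn : 0 < n) {W0 : Matrix (Fin n) (Fin n) ℝ}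
    (hW0 : W0.PosDef) (U : Matrix (Fin n) (Fin k) ℝ) (τ : ℝ)
    (hτ1 : (⨅ i, hW0.1.eigenvalues i) ≤ τ)
    (hτ2 : τ ≤ ⨆ i, hW0.1.eigenvalues i) :
    ∀ μ ∈ spectrum ℝ
        ((τ • (1 : Matrix (Fin n) (Fin n) ℝ) + U * Uᵀ)⁻¹ * (W0 + U * Uᵀ)),
    ∀ ν ∈ spectrum ℝ
        ((τ • (1 : Matrix (Fin n) (Fin n) ℝ) + U * Uᵀ)⁻¹ * (W0 + U * Uᵀ)),
      μ ≤ ((⨆ i, hW0.1.eigenvalues i) / (⨅ i, hW0.1.eigenvalues i)) * ν :=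
  stmt_1_general hW0 U τ hτ1 hτ2
end

section
/- Let A be a real m×N matrix with full column rank N, W_0 an n×n symmetric positive definite matrix (with N = n^2), U an n×k matrix, Z an n×n matrix with Z Z^T = 2 W_0 + U U^T, and define H = A^T (W_0 ⊗ W_0) A + A^T (U ⊗ Z)(U ⊗ Z)^T A and H̃ = τ^2 A^T A + A^T (U ⊗ Z)(U ⊗ Z)^T A, where λ_min(W_0) ≤ τ ≤ λ_max(W_0). Then the generalized condition number κ(H̃^{-1/2} H H̃^{-1/2}) ≤ κ(W_0)^2. -/
/-!
Put `B = τ²AᵀA + C` and `H = Aᵀ(W₀ ⊗ W₀)A + C` with `C = Aᵀ(U ⊗ Z)(U ⊗ Z)ᵀA ⪰ 0`. In the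
Loewner order `λ_min • 1 ≤ W₀ ≤ λ_max • 1`, and monotonicity of the Kronecker product on
positive semidefinite matrices gives `λ_min² • 1 ≤ W₀ ⊗ W₀ ≤ λ_max² • 1`. Since
`λ_min ≤ τ ≤ λ_max`, the common term `C` can be absorbed, so
`(λ_min² / τ²) • B ≤ H ≤ (λ_max² / τ²) • B`. For an eigenvector `v` of `B⁻¹H` with eigenvalue `μ`
we have `vᵀHv = μ vᵀBv` with `vᵀBv > 0`, so every eigenvalue lies in
`[λ_min² / τ², λ_max² / τ²]`, and the ratio of any two is at most `(λ_max / λ_min)²`.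
-/

open Matrix
open scoped Kronecker MatrixOrder ComplexOrder

namespace Matrix

section Loewner

variable {𝕜 : Type*} [RCLike 𝕜] {p q : Type*}

theorem smul_one_kronecker_smul_one [DecidableEq p] [DecidableEq q] (a b : ℝ) :
    (a • 1 : Matrix p p 𝕜) ⊗ₖ (b • 1 : Matrix q q 𝕜) = (a * b) • 1 := by
  rw [smul_kronecker, kronecker_smul, one_kronecker_one, smul_smul, mul_comm]

theorem smul_le_of_le_one {C : Matrix p p 𝕜} (hC : 0 ≤ C) {c : ℝ} (hc : c ≤ 1) : c • C ≤ C := by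
  rw [le_iff, ← one_smul ℝ C, smul_smul, mul_one, ← sub_smul]
  exact (nonneg_iff_posSemidef.mp hC).smul (sub_nonneg.mpr hc)

theorem le_smul_of_one_le {C : Matrix p p 𝕜} (hC : 0 ≤ C) {c : ℝ} (hc : 1 ≤ c) : C ≤ c • C := by
  rw [le_iff, ← one_smul ℝ C, smul_smul, mul_one, ← sub_smul]
  exact (nonneg_iff_posSemidef.mp hC).smul (sub_nonneg.mpr hc)

theorem smul_one_nonneg [DecidableEq p] {a : ℝ} (ha : 0 ≤ a) : 0 ≤ (a • 1 : Matrix p p 𝕜) :=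
  nonneg_iff_posSemidef.mpr (PosSemidef.one.smul ha)

variable [Fintype p] [Fintype q]

theorem kronecker_le_kronecker {A B : Matrix p p 𝕜} {C D : Matrix q q 𝕜}
    (hA : 0 ≤ A) (hAB : A ≤ B) (hC : 0 ≤ C) (hCD : C ≤ D) : A ⊗ₖ C ≤ B ⊗ₖ D := by
  have hB : B.PosSemidef := nonneg_iff_posSemidef.mp (hA.trans hAB)
  have split : B ⊗ₖ D - A ⊗ₖ C = B ⊗ₖ (D - C) + (B - A) ⊗ₖ C := by
    ext ⟨i, j⟩ ⟨k, l⟩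
    simp only [sub_apply, add_apply, kronecker_apply]
    ring
  rw [le_iff, split]
  exact (hB.kronecker hCD).add (hAB.kronecker (nonneg_iff_posSemidef.mp hC))

variable [DecidableEq p]

theorem sq_smul_one_le_kronecker_self {W : Matrix p p 𝕜} {a : ℝ} (ha : 0 ≤ a) (h : a • 1 ≤ W) :
    a ^ 2 • 1 ≤ W ⊗ₖ W := by
  rw [sq, ← smul_one_kronecker_smul_one]
  exact kronecker_le_kronecker (smul_one_nonneg ha) h (smul_one_nonneg ha) h

theorem kronecker_self_le_sq_smul_one {W : Matrix p p 𝕜} (hW : 0 ≤ W) {b : ℝ} (h : W ≤ b • 1) :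
    W ⊗ₖ W ≤ b ^ 2 • 1 := by
  rw [sq, ← smul_one_kronecker_smul_one]
  exact kronecker_le_kronecker hW h hW h

theorem IsHermitian.le_smul_one_of_eigenvalues_le {M : Matrix p p 𝕜} (hM : M.IsHermitian)
    {b : ℝ} (hb : ∀ i, hM.eigenvalues i ≤ b) : M ≤ b • 1 := by
  rw [← Algebra.algebraMap_eq_smul_one]
  refine le_algebraMap_of_spectrum_le (fun x hx => ?_) hM.isSelfAdjoint
  obtain ⟨i, rfl⟩ := hM.spectrum_real_eq_range_eigenvalues ▸ hx
  exact hb i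

theorem IsHermitian.smul_one_le_of_le_eigenvalues {M : Matrix p p 𝕜} (hM : M.IsHermitian)
    {a : ℝ} (ha : ∀ i, a ≤ hM.eigenvalues i) : a • 1 ≤ M := by
  rw [← Algebra.algebraMap_eq_smul_one]
  refine algebraMap_le_of_le_spectrum (fun x hx => ?_) hM.isSelfAdjoint
  obtain ⟨i, rfl⟩ := hM.spectrum_real_eq_range_eigenvalues ▸ hx
  exact ha i

end Loewner

section Congruence

variable {p r : Type*}

theorem mulVec_injective_of_rank_eq_card [Fintype p] {A : Matrix r p ℝ}
    (hA : A.rank = Fintype.card p) : Function.Injective A.mulVec :=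
  mulVec_injective_iff.mpr <| linearIndependent_iff_card_eq_finrank_span.mpr <| by
    rw [← hA, rank_eq_finrank_span_cols, Set.finrank]

variable [Fintype r]

theorem transpose_mul_smul_one_mul [DecidableEq r] (A : Matrix r p ℝ) (c : ℝ) :
    Aᵀ * (c • 1 : Matrix r r ℝ) * A = c • (Aᵀ * A) := by
  rw [Matrix.mul_smul, Matrix.mul_one, Matrix.smul_mul]

variable [Fintype p]

theorem transpose_mul_mul_le_transpose_mul_mul (A : Matrix r p ℝ) {X Y : Matrix r r ℝ}
    (hXY : X ≤ Y) : Aᵀ * X * A ≤ Aᵀ * Y * A := by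
  rw [le_iff, ← Matrix.sub_mul, ← Matrix.mul_sub, ← conjTranspose_eq_transpose_of_trivial]
  exact (le_iff.mp hXY).conjTranspose_mul_mul_same A

variable [DecidableEq r]

theorem div_smul_le_transpose_mul_mul_add (A : Matrix r p ℝ) {X : Matrix r r ℝ}
    {C : Matrix p p ℝ} (hC : 0 ≤ C) {a t : ℝ} (ht : 0 < t) (hat : a ≤ t) (hX : a • 1 ≤ X) :
    (a / t) • (t • (Aᵀ * A) + C) ≤ Aᵀ * X * A + C := by
  rw [smul_add, smul_smul, div_mul_cancel₀ a ht.ne', ← transpose_mul_smul_one_mul]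
  exact add_le_add (transpose_mul_mul_le_transpose_mul_mul A hX)
    (smul_le_of_le_one hC ((div_le_one ht).mpr hat))

theorem transpose_mul_mul_add_le_div_smul (A : Matrix r p ℝ) {X : Matrix r r ℝ}
    {C : Matrix p p ℝ} (hC : 0 ≤ C) {b t : ℝ} (ht : 0 < t) (htb : t ≤ b) (hX : X ≤ b • 1) :
    Aᵀ * X * A + C ≤ (b / t) • (t • (Aᵀ * A) + C) := by
  rw [smul_add, smul_smul, div_mul_cancel₀ b ht.ne', ← transpose_mul_smul_one_mul]
  exact add_le_add (transpose_mul_mul_le_transpose_mul_mul A hX)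
    (le_smul_of_one_le hC ((one_le_div ht).mpr htb))

end Congruence

theorem spectrum_inv_mul_subset_Icc {p : Type*} [Fintype p] [DecidableEq p]
    {B H : Matrix p p ℝ} (hB : B.PosDef) {lo hi : ℝ} (hlo : lo • B ≤ H) (hhi : H ≤ hi • B) :
    spectrum ℝ (B⁻¹ * H) ⊆ Set.Icc lo hi := by
  intro μ hμ
  rw [← spectrum_toLin', ← Module.End.hasEigenvalue_iff_mem_spectrum] at hμ
  obtain ⟨v, hv, hv0⟩ := hμ.exists_hasEigenvector
  rw [Module.End.mem_eigenspace_iff, toLin'_apply] at hv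
  have hHv : H *ᵥ v = μ • (B *ᵥ v) := by
    rw [← mulVec_smul, ← hv, mulVec_mulVec, ← Matrix.mul_assoc,
      mul_nonsing_inv _ ((isUnit_iff_isUnit_det B).mp hB.isUnit), Matrix.one_mul]
  have hBv : 0 < v ⬝ᵥ (B *ᵥ v) := by simpa using hB.dotProduct_mulVec_pos hv0
  have form (c : ℝ) : v ⬝ᵥ ((H - c • B) *ᵥ v) = (μ - c) * (v ⬝ᵥ (B *ᵥ v)) := by
    rw [sub_mulVec, hHv, smul_mulVec, dotProduct_sub, dotProduct_smul, dotProduct_smul,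
      smul_eq_mul, smul_eq_mul, sub_mul]
  have hlo' := (le_iff.mp hlo).dotProduct_mulVec_nonneg v
  have hhi' := (le_iff.mp hhi).dotProduct_mulVec_nonneg v
  rw [star_trivial, form] at hlo'
  rw [star_trivial, ← neg_sub, neg_mulVec, dotProduct_neg, form, neg_nonneg] at hhi'
  exact ⟨sub_nonneg.mp (nonneg_of_mul_nonneg_left hlo' hBv),
    sub_nonpos.mp (nonpos_of_mul_nonpos_left hhi' hBv)⟩

end Matrix

theorem stmt_4_general {n k m : ℕ} (hn : 0 < n)
    (A : Matrix (Fin n × Fin n) (Fin m) ℝ) (hrank : A.rank = m)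
    {W0 : Matrix (Fin n) (Fin n) ℝ} (hW0 : W0.PosDef)
    (U : Matrix (Fin n) (Fin k) ℝ) (Z : Matrix (Fin n) (Fin n) ℝ)
    (τ : ℝ)
    (hτ1 : (⨅ i, hW0.1.eigenvalues i) ≤ τ)
    (hτ2 : τ ≤ ⨆ i, hW0.1.eigenvalues i) :
    ∀ μ ∈ spectrum ℝ
        ((τ ^ 2 • (Aᵀ * A) + Aᵀ * ((U ⊗ₖ Z) * (U ⊗ₖ Z)ᵀ) * A)⁻¹ *
          (Aᵀ * (W0 ⊗ₖ W0) * A + Aᵀ * ((U ⊗ₖ Z) * (U ⊗ₖ Z)ᵀ) * A)),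
    ∀ ν ∈ spectrum ℝ
        ((τ ^ 2 • (Aᵀ * A) + Aᵀ * ((U ⊗ₖ Z) * (U ⊗ₖ Z)ᵀ) * A)⁻¹ *
          (Aᵀ * (W0 ⊗ₖ W0) * A + Aᵀ * ((U ⊗ₖ Z) * (U ⊗ₖ Z)ᵀ) * A)),
      μ ≤ ((⨆ i, hW0.1.eigenvalues i) / (⨅ i, hW0.1.eigenvalues i)) ^ 2 * ν := by
  have : Nonempty (Fin n) := Fin.pos_iff_nonempty.mp hn
  set lmin := ⨅ i, hW0.1.eigenvalues i
  set lmax := ⨆ i, hW0.1.eigenvalues i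
  set C := Aᵀ * ((U ⊗ₖ Z) * (U ⊗ₖ Z)ᵀ) * A
  have hlmin : 0 < lmin := by
    obtain ⟨i, hi⟩ := exists_eq_ciInf_of_finite (f := hW0.1.eigenvalues)
    exact (hW0.eigenvalues_pos i).trans_eq hi
  have hτsq : 0 < τ ^ 2 := pow_pos (hlmin.trans_le hτ1) 2
  have hW_lo : lmin • 1 ≤ W0 := hW0.1.smul_one_le_of_le_eigenvalues fun i =>
    ciInf_le (Set.finite_range _).bddBelow i
  have hW_hi : W0 ≤ lmax • 1 := hW0.1.le_smul_one_of_eigenvalues_le fun i =>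
    le_ciSup (Set.finite_range _).bddAbove i
  have hC : 0 ≤ C := nonneg_iff_posSemidef.mpr <|
    (posSemidef_self_mul_conjTranspose (U ⊗ₖ Z)).conjTranspose_mul_mul_same A
  have hA : Function.Injective A.mulVec :=
    mulVec_injective_of_rank_eq_card (by rw [hrank, Fintype.card_fin])
  have hB : (τ ^ 2 • (Aᵀ * A) + C).PosDef := by
    rw [← conjTranspose_eq_transpose_of_trivial]
    exact ((PosDef.conjTranspose_mul_self A hA).smul hτsq).add_posSemidef hC.posSemidef
  have hlo := div_smul_le_transpose_mul_mul_add A hC hτsq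
    (pow_le_pow_left₀ hlmin.le hτ1 2) (sq_smul_one_le_kronecker_self hlmin.le hW_lo)
  have hhi := transpose_mul_mul_add_le_div_smul A hC hτsq
    (pow_le_pow_left₀ (hlmin.trans_le hτ1).le hτ2 2)
    (kronecker_self_le_sq_smul_one hW0.posSemidef.nonneg hW_hi)
  intro μ hμ ν hν
  calc μ ≤ lmax ^ 2 / τ ^ 2 := (spectrum_inv_mul_subset_Icc hB hlo hhi hμ).2
    _ = (lmax / lmin) ^ 2 * (lmin ^ 2 / τ ^ 2) := by field_simp
    _ ≤ (lmax / lmin) ^ 2 * ν := by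
      gcongr
      exact (spectrum_inv_mul_subset_Icc hB hlo hhi hν).1

/-- Preconditioner quality for the Hessian matrix.  With
`H = 𝐀ᵀ(W₀⊗W₀)𝐀 + 𝐀ᵀ(U⊗Z)(U⊗Z)ᵀ𝐀` and `H̃ = τ²𝐀ᵀ𝐀 + 𝐀ᵀ(U⊗Z)(U⊗Z)ᵀ𝐀`,
where `Z Zᵀ = 2W₀ + UUᵀ` and `λ_min(W₀) ≤ τ ≤ λ_max(W₀)`, the ratio of any two
eigenvalues of `H̃⁻¹ H` (similar to `H̃^{-1/2} H H̃^{-1/2}`) is at most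
`κ(W₀)²`. -/
theorem stmt_4 {n k m : ℕ} (hn : 0 < n)
    (A : Matrix (Fin n × Fin n) (Fin m) ℝ) (hrank : A.rank = m)
    {W0 : Matrix (Fin n) (Fin n) ℝ} (hW0 : W0.PosDef)
    (U : Matrix (Fin n) (Fin k) ℝ) (Z : Matrix (Fin n) (Fin n) ℝ)
    (hZ : Z * Zᵀ = (2 : ℝ) • W0 + U * Uᵀ) (τ : ℝ)
    (hτ1 : (⨅ i, hW0.1.eigenvalues i) ≤ τ)
    (hτ2 : τ ≤ ⨆ i, hW0.1.eigenvalues i) :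
    ∀ μ ∈ spectrum ℝ
        ((τ ^ 2 • (Aᵀ * A) + Aᵀ * ((U ⊗ₖ Z) * (U ⊗ₖ Z)ᵀ) * A)⁻¹ *
          (Aᵀ * (W0 ⊗ₖ W0) * A + Aᵀ * ((U ⊗ₖ Z) * (U ⊗ₖ Z)ᵀ) * A)),
    ∀ ν ∈ spectrum ℝ
        ((τ ^ 2 • (Aᵀ * A) + Aᵀ * ((U ⊗ₖ Z) * (U ⊗ₖ Z)ᵀ) * A)⁻¹ *
          (Aᵀ * (W0 ⊗ₖ W0) * A + Aᵀ * ((U ⊗ₖ Z) * (U ⊗ₖ Z)ᵀ) * A)),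
      μ ≤ ((⨆ i, hW0.1.eigenvalues i) / (⨅ i, hW0.1.eigenvalues i)) ^ 2 * ν :=
  stmt_4_general hn A hrank hW0 U Z τ hτ1 hτ2
end
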